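/- Let n ≥ 6, let ψ : {1,…,n} → ℂ and let P be the homogeneous operator of degree 1 associated to ψ. Suppose P is a Nijenhuis operator, i.e. P(x)·P(y) = P(x·P(y) + P(x)·y − P(x·y)) for all x, y ∈ A. Then ψ(n) = 0, and: (a) ψ(i)·(ψ(1) + ψ(i−2) − ψ(i−1)) = ψ(1)·ψ(i−2) for all 3 ≤ i ≤ n−1 (so if ψ(1) ≠ 0 the values ψ(i) satisfy the recurrence ψ(i) = ψ(1)ψ(i−2)/(ψ(1) + ψ(i−2) − ψ(i−1)) whenever the denominator is nonzero); (b) if ψ(1) = 0 and there exists t with 2 ≤ t ≤ ⌊(n−2)/2⌋ and ψ(t) ≠ 0, with t the least index with ψ(t) ≠ 0, then for every 1 ≤ i ≤ n−1: if (t+1) divides (i+1) then (i+1)·ψ(i) = (t+1)·ψ(t), and otherwise ψ(i) = 0; (c) if ψ(t) = 0 for all 1 ≤ t ≤ ⌊(n−2)/2⌋, then ψ is nonzero at most at one index: for all r, s with ⌊(n−2)/2⌋ < r < s ≤ n−1, either ψ(r) = 0 or ψ(s) = 0. -/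
import Mathlib


open Finset

/-- Coordinate space of the `n`-dimensional complex null-filiform associative algebra,
with respect to the basis `e_1, …, e_n` (coordinate `m : Fin n` corresponds to `e_{m+1}`). -/
abbrev NF (n : ℕ) : Type := Fin n → ℂ

/-- Multiplication of the null-filiform algebra: `e_i · e_j = e_{i+j}` if `i + j ≤ n`
and `e_i · e_j = 0` if `i + j > n`, extended bilinearly. -/
noncomputable def nfMul {n : ℕ} (x y : NF n) : NF n :=
  fun m => ∑ i : Fin n, ∑ j : Fin n,
    if (i : ℕ) + (j : ℕ) + 1 = (m : ℕ) then x i * y j else 0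

/-- The basis element `e_k`, for `1 ≤ k ≤ n` (it is `0` if `k = 0` or `k > n`). -/
noncomputable def nfE (n k : ℕ) : NF n := fun m => if (m : ℕ) + 1 = k then 1 else 0

/-- The `k`-th power (for `k ≥ 1`) of an element of the null-filiform algebra. -/
noncomputable def nfPow {n : ℕ} (x : NF n) : ℕ → NF n
  | 0 => 0
  | 1 => x
  | k + 2 => nfMul (nfPow x (k + 1)) x

lemma nfE_zero {n k : ℕ} (h : n < k) : nfE n k = 0 := by
  funext m
  have := m.isLt
  simp only [nfE, Pi.zero_apply]
  rw [if_neg]; omega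

lemma nfMul_smul_left {n : ℕ} (c : ℂ) (x y : NF n) :
    nfMul (c • x) y = c • nfMul x y := by
  funext m
  simp only [nfMul, Pi.smul_apply, smul_eq_mul, Finset.mul_sum]
  refine Finset.sum_congr rfl fun i _ => Finset.sum_congr rfl fun j _ => ?_
  split <;> ring

lemma nfMul_smul_right {n : ℕ} (c : ℂ) (x y : NF n) :
    nfMul x (c • y) = c • nfMul x y := by
  funext m
  simp only [nfMul, Pi.smul_apply, smul_eq_mul, Finset.mul_sum]
  refine Finset.sum_congr rfl fun i _ => Finset.sum_congr rfl fun j _ => ?_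
  split <;> ring

lemma nfMul_e {n i j : ℕ} (hi1 : 1 ≤ i) (hin : i ≤ n) (hj1 : 1 ≤ j) (hjn : j ≤ n) :
    nfMul (nfE n i) (nfE n j) = nfE n (i + j) := by
  funext m
  have hm := m.isLt
  simp only [nfMul, nfE]
  rw [Finset.sum_eq_single (⟨i - 1, by omega⟩ : Fin n)]
  · rw [Finset.sum_eq_single (⟨j - 1, by omega⟩ : Fin n)]
    · simp only []
      by_cases h : (m : ℕ) + 1 = i + j
      · rw [if_pos (by omega), if_pos (by omega), if_pos (by omega), if_pos h]; ring
      · rw [if_neg h, if_neg (by omega)]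
    · intro b _ hb
      have hb' : ¬ ((b : ℕ) + 1 = j) := fun h => hb (Fin.ext (by simp only [Fin.val_mk]; omega))
      rw [if_neg hb', mul_zero, ite_self]
    · intro h; exact absurd (Finset.mem_univ _) h
  · intro a _ ha
    apply Finset.sum_eq_zero
    intro b _
    have ha' : ¬ ((a : ℕ) + 1 = i) := fun h => ha (Fin.ext (by simp only [Fin.val_mk]; omega))
    rw [if_neg ha', zero_mul, ite_self]
  · intro h; exact absurd (Finset.mem_univ _) h

lemma nf_key {n : ℕ} (ψ : ℕ → ℂ) (P : NF n →ₗ[ℂ] NF n)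
    (hP : ∀ i, 1 ≤ i → i ≤ n →
      P (nfE n i) = ψ i • nfE n (if i + 1 ≤ n then i + 1 else i + 1 - n))
    (hNij : ∀ x y : NF n,
      nfMul (P x) (P y) =
        P (nfMul x (P y) + nfMul (P x) y - P (nfMul x y)))
    (i j : ℕ) (hi : 1 ≤ i) (hj : 1 ≤ j) (h : i + j + 2 ≤ n) :
    ψ i * ψ j = (ψ i + ψ j - ψ (i + j)) * ψ (i + j + 1) := by
  have h1 := hNij (nfE n i) (nfE n j)
  rw [hP i hi (by omega), hP j hj (by omega), if_pos (by omega : i + 1 ≤ n),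
      if_pos (by omega : j + 1 ≤ n)] at h1
  rw [nfMul_smul_left, nfMul_smul_right, nfMul_smul_right, nfMul_smul_left,
      nfMul_e hi (by omega) (by omega) (by omega),
      nfMul_e (by omega) (by omega) hj (by omega),
      nfMul_e hi (by omega) hj (by omega),
      nfMul_e (by omega) (by omega) (by omega) (by omega)] at h1
  rw [hP (i + j) (by omega) (by omega), if_pos (by omega : i + j + 1 ≤ n)] at h1
  have e1 : i + (j + 1) = i + j + 1 := by omega
  have e2 : i + 1 + j = i + j + 1 := by omega
  have e3 : i + 1 + (j + 1) = i + j + 2 := by omega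
  rw [e1, e2, e3] at h1
  rw [← add_smul, ← sub_smul, map_smul, hP (i + j + 1) (by omega) (by omega),
      if_pos (by omega : i + j + 1 + 1 ≤ n)] at h1
  have e4 : i + j + 1 + 1 = i + j + 2 := by omega
  rw [e4] at h1
  have h2 := congrFun h1 (⟨i + j + 1, by omega⟩ : Fin n)
  simp only [Pi.smul_apply, smul_eq_mul, nfE] at h2
  rw [if_pos (by simp only [Fin.val_mk])] at h2
  linear_combination h2

lemma nf_psin {n : ℕ} (hn : 2 ≤ n) (ψ : ℕ → ℂ) (P : NF n →ₗ[ℂ] NF n)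
    (hP : ∀ i, 1 ≤ i → i ≤ n →
      P (nfE n i) = ψ i • nfE n (if i + 1 ≤ n then i + 1 else i + 1 - n))
    (hNij : ∀ x y : NF n,
      nfMul (P x) (P y) =
        P (nfMul x (P y) + nfMul (P x) y - P (nfMul x y))) :
    ψ n = 0 := by
  have h1 := hNij (nfE n (n - 1)) (nfE n n)
  rw [hP (n - 1) (by omega) (by omega), if_pos (by omega : n - 1 + 1 ≤ n),
      hP n (by omega) le_rfl, if_neg (by omega : ¬ n + 1 ≤ n)] at h1
  have e0 : n - 1 + 1 = n := by omega
  have e5 : n + 1 - n = 1 := by omega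
  rw [e0, e5] at h1
  rw [nfMul_smul_left, nfMul_smul_right, nfMul_smul_right, nfMul_smul_left,
      nfMul_e (by omega) (by omega) (by omega) (by omega : (1:ℕ) ≤ n),
      nfMul_e (by omega) le_rfl (by omega) le_rfl,
      nfMul_e (by omega) (by omega) (by omega) le_rfl,
      nfMul_e (by omega) (by omega) (by omega) (by omega : (1:ℕ) ≤ n)] at h1
  rw [e0] at h1
  rw [nfE_zero (by omega : n < n + n), nfE_zero (by omega : n < n - 1 + n),
      nfE_zero (by omega : n < n + 1)] at h1
  rw [smul_zero, smul_zero, map_zero] at h1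
  rw [add_zero, sub_zero, map_smul, hP n (by omega) le_rfl,
      if_neg (by omega : ¬ n + 1 ≤ n), e5] at h1
  have h2 := congrFun h1 (⟨0, by omega⟩ : Fin n)
  simp only [Pi.smul_apply, Pi.add_apply, Pi.sub_apply, Pi.zero_apply, smul_eq_mul,
    nfE, smul_zero] at h2
  rw [if_pos (by simp)] at h2
  have : ψ n * ψ n = 0 := by linear_combination -h2 
  exact pow_eq_zero_iff (n := 2) (by norm_num) |>.mp (by rw [sq]; exact this)

/-- Nijenhuis operator of degree `1` on the null-filiform algebra (`n ≥ 6`): `ψ(n) = 0`,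
and (a) `ψ(i)(ψ(1)+ψ(i−2)−ψ(i−1)) = ψ(1)ψ(i−2)` for `3 ≤ i ≤ n−1`; (b) if `ψ(1) = 0`
and `t` is the least index with `ψ(t) ≠ 0`, `2 ≤ t ≤ ⌊(n−2)/2⌋`, then
`(i+1)ψ(i) = (t+1)ψ(t)` when `(t+1) ∣ (i+1)` and `ψ(i) = 0` otherwise; (c) if `ψ`
vanishes on `{1, …, ⌊(n−2)/2⌋}`, then `ψ` is nonzero at most at one index. -/
theorem nijenhuis_degree1 (n : ℕ) (hn : 6 ≤ n)
    (ψ : ℕ → ℂ) (P : NF n →ₗ[ℂ] NF n)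
    (hP : ∀ i, 1 ≤ i → i ≤ n →
      P (nfE n i) = ψ i • nfE n (if i + 1 ≤ n then i + 1 else i + 1 - n))
    (hNij : ∀ x y : NF n,
      nfMul (P x) (P y) =
        P (nfMul x (P y) + nfMul (P x) y - P (nfMul x y))) :
    ψ n = 0 ∧
    (∀ i, 3 ≤ i → i ≤ n - 1 →
      ψ i * (ψ 1 + ψ (i - 2) - ψ (i - 1)) = ψ 1 * ψ (i - 2)) ∧
    (ψ 1 = 0 → ∀ t, 2 ≤ t → t ≤ (n - 2) / 2 → ψ t ≠ 0 →
      (∀ s, 1 ≤ s → s < t → ψ s = 0) →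
      ∀ i, 1 ≤ i → i ≤ n - 1 →
        ((t + 1) ∣ (i + 1) → ((i : ℂ) + 1) * ψ i = ((t : ℂ) + 1) * ψ t) ∧
        (¬ (t + 1) ∣ (i + 1) → ψ i = 0)) ∧
    ((∀ t, 1 ≤ t → t ≤ (n - 2) / 2 → ψ t = 0) →
      ∀ r s, (n - 2) / 2 < r → r < s → s ≤ n - 1 → ψ r = 0 ∨ ψ s = 0) := by
  have key := nf_key ψ P hP hNij
  have hpsn : ψ n = 0 := nf_psin (by omega) ψ P hP hNij
  refine ⟨hpsn, ?_, ?_, ?_⟩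
  · -- (a)
    intro i h3 hin
    have k := key (i - 2) 1 (by omega) le_rfl (by omega)
    have e1 : i - 2 + 1 = i - 1 := by omega
    have e2 : i - 1 + 1 = i := by omega
    rw [e1, e2] at k
    linear_combination -k
  · -- (b)
    intro hψ1 t ht2 htm hψt hmin i
    induction i using Nat.strong_induction_on with
    | _ i IH =>
      intro hi1 hin
      rcases lt_or_ge i t with hlt | hge
      · refine ⟨fun hdvd => absurd (Nat.le_of_dvd (by omega) hdvd) (by omega),
          fun _ => hmin i hi1 hlt⟩
      rcases eq_or_lt_of_le hge with rfl | hgt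
      · exact ⟨fun _ => rfl, fun h => absurd dvd_rfl h⟩
      by_cases hdvd : (t + 1) ∣ (i + 1)
      · -- divisible case
        have hi2 : 2 * t + 1 ≤ i := by
          obtain ⟨c, hc⟩ := hdvd
          have hc2 : 2 ≤ c := by rcases c with _ | _ | c <;> omega
          have := Nat.mul_le_mul_left (t + 1) hc2
          omega
        set b := i - 1 - t with hb
        have hb1 : 1 ≤ b := by omega
        have hbdvd : (t + 1) ∣ (b + 1) := by
          have e : b + 1 = i + 1 - (t + 1) := by omega
          rw [e]; exact Nat.dvd_sub hdvd dvd_rfl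
        have IHb := (IH b (by omega) (by omega) (by omega)).1 hbdvd
        have hnd : ¬ (t + 1) ∣ i := by
          intro h
          have h1 := Nat.dvd_sub hdvd h
          have : i + 1 - i = 1 := by omega
          rw [this] at h1
          exact absurd (Nat.le_of_dvd one_pos h1) (by omega)
        have hI1 : ψ (i - 1) = 0 := by
          refine (IH (i - 1) (by omega) (by omega) (by omega)).2 ?_
          have e : i - 1 + 1 = i := by omega
          rw [e]; exact hnd
        have kk := key t b (by omega) hb1 (by omega)
        have e1 : t + b = i - 1 := by omega
        have e2 : i - 1 + 1 = i := by omega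
        rw [e1, e2, hI1] at kk
        have ebn : b + 1 + t = i := by omega
        have ebc : ((b : ℕ) : ℂ) + 1 + (t : ℂ) = (i : ℂ) := by
          exact_mod_cast congrArg (fun x : ℕ => (x : ℂ)) ebn
        refine ⟨fun _ => ?_, fun h => absurd hdvd h⟩
        apply mul_left_cancel₀ hψt
        linear_combination ((t : ℂ) - (i : ℂ)) * kk - (ψ i - ψ t) * IHb +
          (ψ i - ψ t) * ψ b * ebc
      · by_cases hdvd' : (t + 1) ∣ i
        · -- residue 1 case
          have hi3 : t + 1 ≤ i := Nat.le_of_dvd (by omega) hdvd'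
          have hI2 : ψ (i - 2) = 0 := by
            refine (IH (i - 2) (by omega) (by omega) (by omega)).2 ?_
            intro h
            have e : i - 2 + 1 = i - 1 := by omega
            rw [e] at h
            have h1 := Nat.dvd_sub hdvd' h
            have : i - (i - 1) = 1 := by omega
            rw [this] at h1
            exact absurd (Nat.le_of_dvd one_pos h1) (by omega)
          have hI1 : ψ (i - 1) ≠ 0 := by
            intro h0
            have h5 := (IH (i - 1) (by omega) (by omega) (by omega)).1 (by
              have e : i - 1 + 1 = i := by omega
              rw [e]; exact hdvd')
            rw [h0, mul_zero] at h5
            exact (mul_ne_zero (Nat.cast_add_one_ne_zero t) hψt) h5.symm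
          have kk := key 1 (i - 2) le_rfl (by omega) (by omega)
          have e1 : 1 + (i - 2) = i - 1 := by omega
          have e2 : i - 1 + 1 = i := by omega
          rw [e1, e2, hψ1, hI2] at kk
          have : ψ (i - 1) * ψ i = 0 := by linear_combination kk
          rcases mul_eq_zero.mp this with h | h
          · exact absurd h hI1
          · exact ⟨fun hd => absurd hd hdvd, fun _ => h⟩
        · -- residue ≥ 2 case
          have hi3 : t + 2 ≤ i := by
            rcases eq_or_lt_of_le (show t + 1 ≤ i by omega) with heq | h
            · exact absurd (heq ▸ dvd_rfl) hdvd'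
            · omega
          set b := i - 1 - t with hb
          have hbz : ψ b = 0 := by
            refine (IH b (by omega) (by omega) (by omega)).2 ?_
            intro h
            have e : i + 1 = (b + 1) + (t + 1) := by omega
            exact hdvd (e ▸ Nat.dvd_add h dvd_rfl)
          have hI1 : ψ (i - 1) = 0 := by
            refine (IH (i - 1) (by omega) (by omega) (by omega)).2 ?_
            have e : i - 1 + 1 = i := by omega
            rw [e]; exact hdvd'
          have kk := key t b (by omega) (by omega) (by omega)
          have e1 : t + b = i - 1 := by omega
          have e2 : i - 1 + 1 = i := by omega
          rw [e1, e2, hI1, hbz] at kk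
          have : ψ t * ψ i = 0 := by linear_combination -kk
          rcases mul_eq_zero.mp this with h | h
          · exact absurd h hψt
          · exact ⟨fun hd => absurd hd hdvd, fun _ => h⟩
  · -- (c)
    intro hz r s hr hrs hsn
    by_contra hcon
    push_neg at hcon
    obtain ⟨hψr, hψs⟩ := hcon
    set m := (n - 2) / 2 with hm
    have hm2 : 2 ≤ m := by omega
    have hmn : 2 * m + 2 ≤ n ∧ n ≤ 2 * m + 3 := by omega
    rcases le_or_gt s (2 * m + 1) with hs1 | hs2
    · have h0 : ψ (s - 1) = 0 := by
        have kk := key (s - 1 - m) m (by omega) (by omega) (by omega)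
        have e1 : s - 1 - m + m = s - 1 := by omega
        have e2 : s - 1 + 1 = s := by omega
        rw [e1, e2, hz _ (by omega) (by omega), hz m (by omega) le_rfl] at kk
        have : ψ (s - 1) * ψ s = 0 := by linear_combination kk
        rcases mul_eq_zero.mp this with h | h
        · exact h
        · exact absurd h hψs
      rcases eq_or_lt_of_le (show r + 1 ≤ s by omega) with heq | hlt
      · refine absurd ?_ hψr
        have e : s - 1 = r := by omega
        rw [← e]; exact h0
      · have kk := key r (s - 1 - r) (by omega) (by omega) (by omega)
        have e1 : r + (s - 1 - r) = s - 1 := by omega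
        have e2 : s - 1 + 1 = s := by omega
        rw [e1, e2, hz (s - 1 - r) (by omega) (by omega), h0] at kk
        exact absurd (by linear_combination -kk : ψ r * ψ s = 0) (mul_ne_zero hψr hψs)
    · have hs' : s = n - 1 := by omega
      have hψn1 : ψ (n - 1) ≠ 0 := hs' ▸ hψs
      have hr2 : ψ (n - 2) ≠ 0 := by
        rcases eq_or_lt_of_le (show r ≤ n - 2 by omega) with heq | hlt
        · rwa [← heq]
        · have kk := key (n - 2 - r) r (by omega) (by omega) (by omega)
          have e1 : n - 2 - r + r = n - 2 := by omega
          have e2 : n - 2 + 1 = n - 1 := by omega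
          rw [e1, e2, hz (n - 2 - r) (by omega) (by omega)] at kk
          have : (ψ r - ψ (n - 2)) * ψ (n - 1) = 0 := by linear_combination -kk
          rcases mul_eq_zero.mp this with h | h
          · intro h2; exact hψr (by linear_combination h + h2)
          · exact absurd h hψn1
      have h3 : ψ (n - 3) = ψ (n - 2) := by
        have kk := key 1 (n - 3) le_rfl (by omega) (by omega)
        have e1 : 1 + (n - 3) = n - 2 := by omega
        have e2 : n - 2 + 1 = n - 1 := by omega
        rw [e1, e2, hz 1 (by omega) (by omega)] at kk
        have : (ψ (n - 3) - ψ (n - 2)) * ψ (n - 1) = 0 := by linear_combination -kk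
        rcases mul_eq_zero.mp this with h | h
        · linear_combination h
        · exact absurd h hψn1
      have kk := key m m (by omega) (by omega) (by omega)
      have e1 : m + m = n - 3 := by omega
      have e2 : n - 3 + 1 = n - 2 := by omega
      rw [e1, e2, hz m (by omega) le_rfl] at kk
      have : ψ (n - 3) * ψ (n - 2) = 0 := by linear_combination kk
      exact absurd this (mul_ne_zero (h3 ▸ hr2) hr2)
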